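/- Let 0 < s < t and c > 0. Then ∫₀^∞ (φ_{t-s}(c - x) − φ_{t-s}(c + x)) · (x t^{3/2} / (c s^{3/2})) · exp(-x²/(2s)) · exp(c²/(2t)) dx = 1. (Normalization of the Brownian meander transition density.) -/

import Mathlib

/-!
Completing the square, `φ_{t-s}(c ∓ x) e^{-x²/(2s)} e^{c²/(2t)} = √(s/t) φ_v(x ∓ a)` with
`v = (t-s)s/t` and `a = cs/t`, so the integrand is `t/(cs) · x (φ_v(x - a) - φ_v(x + a))`.
Reflecting `x ↦ -x` turns `∫₀^∞ x (φ_v(x - a) - φ_v(x + a)) dx` into `∫_ℝ x φ_v(x - a) dx = a`,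
the mean of the Gaussian `N(a, v)`, and `t/(cs) · cs/t = 1`.
-/

open Real MeasureTheory Set

/-- Centered Gaussian density with variance `σ`. -/
noncomputable def phi (σ x : ℝ) : ℝ := (Real.sqrt (2 * π * σ))⁻¹ * Real.exp (-x ^ 2 / (2 * σ))

open ProbabilityTheory NNReal

lemma phi_neg (σ x : ℝ) : phi σ (-x) = phi σ x := by
  simp [phi]

lemma phi_sub_eq_gaussianPDFReal {σ : ℝ} (hσ : 0 ≤ σ) (a x : ℝ) :
    phi σ (x - a) = gaussianPDFReal a σ.toNNReal x := by
  simp [phi, gaussianPDFReal, Real.coe_toNNReal _ hσ]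

lemma integrable_mul_gaussianPDFReal (a : ℝ) {v : ℝ≥0} (hv : v ≠ 0) :
    Integrable (fun x ↦ x * gaussianPDFReal a v x) := by
  have h := (memLp_id_gaussianReal (μ := a) (v := v) 1).integrable le_rfl
  rw [gaussianReal_of_var_ne_zero _ hv, integrable_withDensity_iff_integrable_smul'
    (measurable_gaussianPDF _ _) (ae_of_all _ fun _ ↦ gaussianPDF_lt_top)] at h
  simpa [mul_comm] using h

lemma integral_mul_gaussianPDFReal (a : ℝ) {v : ℝ≥0} (hv : v ≠ 0) :
    ∫ x, x * gaussianPDFReal a v x = a := by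
  simpa [mul_comm] using
    (integral_gaussianReal_eq_integral_smul (f := id) hv).symm.trans integral_id_gaussianReal

lemma integral_Ioi_mul_phi_sub_sub_phi_add {σ : ℝ} (hσ : 0 < σ) (a : ℝ) :
    ∫ x in Ioi (0 : ℝ), x * (phi σ (x - a) - phi σ (x + a)) = a := by
  set h : ℝ → ℝ := fun x ↦ x * phi σ (x - a)
  have hv : σ.toNNReal ≠ 0 := by simpa using hσ
  have hh : Integrable h := by
    simpa only [h, phi_sub_eq_gaussianPDFReal hσ.le] using integrable_mul_gaussianPDFReal a hv
  -- `h (-x) = -x φ(-x - a) = -x φ(x + a)` since `φ` is even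
  have hsymm : ∀ x, x * (phi σ (x - a) - phi σ (x + a)) = h x + h (-x) := fun x ↦ by
    simp only [h, ← phi_neg σ (-x - a)]
    ring_nf
  simp_rw [hsymm]
  rw [integral_add hh.integrableOn hh.comp_neg.integrableOn, integral_comp_neg_Ioi, neg_zero,
    add_comm, intervalIntegral.integral_Iic_add_Ioi hh.integrableOn hh.integrableOn]
  simpa only [h, phi_sub_eq_gaussianPDFReal hσ.le] using integral_mul_gaussianPDFReal a hv

lemma phi_mul_exp_mul_exp {s t : ℝ} (hs : 0 < s) (hst : s < t) (c x : ℝ) :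
    phi (t - s) (c - x) * exp (-x ^ 2 / (2 * s)) * exp (c ^ 2 / (2 * t)) =
      √(s / t) * phi ((t - s) * s / t) (x - c * s / t) := by
  have ht : 0 < t := hs.trans hst
  have hu : 0 < t - s := sub_pos.mpr hst
  have hsqrt : √(2 * π * ((t - s) * s / t)) = √(2 * π * (t - s)) * √(s / t) := by
    rw [← sqrt_mul (by positivity)]
    congr 1
    ring
  have hexp : -(c - x) ^ 2 / (2 * (t - s)) + -x ^ 2 / (2 * s) + c ^ 2 / (2 * t) =
      -(x - c * s / t) ^ 2 / (2 * ((t - s) * s / t)) := by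
    field_simp
    ring
  have : √(s / t) ≠ 0 := by positivity
  rw [phi, phi, hsqrt, ← hexp, exp_add, exp_add]
  field_simp

lemma rpow_three_halves_eq_mul_sqrt {x : ℝ} (hx : 0 ≤ x) : x ^ (3 / 2 : ℝ) = x * √x := by
  rw [Real.sqrt_eq_rpow, ← rpow_one_add' hx (by norm_num)]
  norm_num

theorem stmt7 (s t c : ℝ) (hs : 0 < s) (hst : s < t) (hc : 0 < c) :
    ∫ x in Ioi (0 : ℝ),
        (phi (t - s) (c - x) - phi (t - s) (c + x)) *
          (x * t ^ ((3 : ℝ) / 2) / (c * s ^ ((3 : ℝ) / 2))) *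
          Real.exp (-x ^ 2 / (2 * s)) * Real.exp (c ^ 2 / (2 * t)) = 1 := by
  have ht : 0 < t := hs.trans hst
  have hconst : t ^ ((3 : ℝ) / 2) / (c * s ^ ((3 : ℝ) / 2)) * √(s / t) = t / (c * s) := by
    rw [rpow_three_halves_eq_mul_sqrt hs.le, rpow_three_halves_eq_mul_sqrt ht.le, sqrt_div hs.le]
    have : √s ≠ 0 := by positivity
    have : √t ≠ 0 := by positivity
    field_simp
  have hintegrand : ∀ x, (phi (t - s) (c - x) - phi (t - s) (c + x)) *
      (x * t ^ ((3 : ℝ) / 2) / (c * s ^ ((3 : ℝ) / 2))) *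
      exp (-x ^ 2 / (2 * s)) * exp (c ^ 2 / (2 * t)) =
      t / (c * s) * (x * (phi ((t - s) * s / t) (x - c * s / t) -
        phi ((t - s) * s / t) (x + c * s / t))) := fun x ↦ by
    have h₁ := phi_mul_exp_mul_exp hs hst c x
    have h₂ : phi (t - s) (c + x) * exp (-x ^ 2 / (2 * s)) * exp (c ^ 2 / (2 * t)) =
        √(s / t) * phi ((t - s) * s / t) (x + c * s / t) := by
      rw [← phi_neg, neg_add', ← neg_sq c, phi_mul_exp_mul_exp hs hst, neg_mul, neg_div,
        sub_neg_eq_add]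
    rw [← hconst]
    linear_combination (x * t ^ ((3 : ℝ) / 2) / (c * s ^ ((3 : ℝ) / 2))) * (h₁ - h₂)
  simp_rw [hintegrand]
  rw [integral_const_mul, integral_Ioi_mul_phi_sub_sub_phi_add (by positivity)]
  field_simp
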